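/- Let a > 0, λ < 0, n ≥ 1, and let y₂ solve y₂' = -a - λ e^{-2y₂/n} with y₂(0) = c₀, where c₂ := λ e^{-2c₀/n} / (a + λ e^{-2c₀/n}) satisfies c₂ > 1 (so that the denominator below is positive for t ≥ 0). Then y₂(t) = -(n/2)·ln( (-a/λ)·c₂ e^{2at/n} / (c₂ e^{2at/n} - 1) ), and y₂ is bounded on [0,∞). -/

import Mathlib

/-!
The substitution `Q = exp (2 y / n)` linearizes the equation: `Q' = -(2a/n) (Q + l/a)`, so
`Q t = -l/a + (Q 0 + l/a) e^{-2at/n}`, and the definition of `c₂` is exactly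
`Q 0 + l/a = l / (a c₂)`. Hence `Q t = (-l/a) (1 - (c₂ e^{2at/n})⁻¹)`, which is the
reciprocal of the argument of the logarithm, and for `t ≥ 0` it stays in
`[(-l/a)(1 - c₂⁻¹), -l/a]`, an interval of positive numbers since `c₂ > 1`.
So `y = (n/2) log Q` is bounded.
-/

open Real Set

theorem eq_add_mul_exp_neg_of_hasDerivAt {f : ℝ → ℝ} {b k : ℝ}
    (hf : ∀ t ∈ Ici (0 : ℝ), HasDerivAt f (-b * (f t - k)) t) {t : ℝ} (ht : 0 ≤ t) :
    f t = k + (f 0 - k) * exp (-(b * t)) := by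
  set g : ℝ → ℝ := fun s => (f s - k) * exp (b * s)
  have hg : ∀ s ∈ Ici (0 : ℝ), HasDerivAt g 0 s := by
    intro s hs
    have hexp : HasDerivAt (fun s => exp (b * s)) (exp (b * s) * b) s := by
      simpa using ((hasDerivAt_id s).const_mul b).exp
    exact (((hf s hs).sub_const k).mul hexp).congr_deriv (by ring)
  have hconst : g t = g 0 :=
    constant_of_has_deriv_right_zero (fun s hs => (hg s hs.1).continuousAt.continuousWithinAt)
      (fun s hs => (hg s hs.1).hasDerivWithinAt) t ⟨ht, le_rfl⟩
  simp only [g, mul_zero, exp_zero, mul_one] at hconst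
  rw [exp_neg, ← hconst]
  field_simp
  ring

theorem hasDerivAt_exp_two_mul_div {y : ℝ → ℝ} {a l n t : ℝ} (ha : a ≠ 0)
    (hy : HasDerivAt y (-a - l * exp (-2 * y t / n)) t) :
    HasDerivAt (fun s => exp (2 * y s / n)) (-(2 * a / n) * (exp (2 * y t / n) - -l / a)) t := by
  convert ((hy.const_mul 2).div_const n).exp using 1
  have hinv : exp (-2 * y t / n) * exp (2 * y t / n) = 1 := by
    rw [← exp_add]; ring_nf; exact exp_zero
  have hcancel : -l / a * a = -l := div_mul_cancel₀ _ ha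
  linear_combination (2 * l / n) * hinv + (2 / n) * hcancel

theorem inv_sub_neg_div_eq_div_mul_of_eq_div {a l E c : ℝ} (ha : a ≠ 0) (hE : E ≠ 0)
    (hc : c = l * E / (a + l * E)) (hc0 : c ≠ 0) :
    E⁻¹ - -l / a = l / (a * c) := by
  have hd : a + l * E ≠ 0 := by
    rintro hd; rw [hd, div_zero] at hc; exact hc0 hc
  have hl : l ≠ 0 := by
    rintro rfl; rw [zero_mul, zero_div] at hc; exact hc0 hc
  rw [hc]
  field_simp
  ring

theorem abs_log_le_max_of_mem_Icc {x lo hi : ℝ} (hlo : 0 < lo) (hx : x ∈ Icc lo hi) :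
    |log x| ≤ max |log lo| |log hi| :=
  abs_le_max_abs_abs (log_le_log hlo hx.1) (log_le_log (hlo.trans_le hx.1) hx.2)

/-- The ODE `y₂' = -a - λ e^{-2 y₂ / n}`, `y₂(0) = c₀`, with `a > 0`, `λ < 0`, `n ≥ 1`,
and `c₂ = λ e^{-2c₀/n}/(a + λ e^{-2c₀/n}) > 1`, has explicit solution
`y₂(t) = -(n/2) log((-a/λ) c₂ e^{2at/n} / (c₂ e^{2at/n} - 1))`, bounded on `[0,∞)`. -/
theorem stmt_1 (n a l c₀ c₂ : ℝ) (hn : 1 ≤ n) (ha : 0 < a) (hl : l < 0)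
    (hc₂ : c₂ = l * Real.exp (-2 * c₀ / n) / (a + l * Real.exp (-2 * c₀ / n)))
    (hc₂gt : 1 < c₂)
    (y : ℝ → ℝ) (hy0 : y 0 = c₀)
    (hode : ∀ t ∈ Set.Ici (0 : ℝ), HasDerivAt y (-a - l * Real.exp (-2 * y t / n)) t) :
    (∀ t ∈ Set.Ici (0 : ℝ),
      y t = -(n / 2) * Real.log ((-a / l) * (c₂ * Real.exp (2 * a * t / n)) /
        (c₂ * Real.exp (2 * a * t / n) - 1))) ∧
    ∃ K : ℝ, ∀ t ∈ Set.Ici (0 : ℝ), |y t| ≤ K := by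
  have hn0 : 0 < n := zero_lt_one.trans_le hn
  have hc₂0 : 0 < c₂ := zero_lt_one.trans hc₂gt
  have hQ : ∀ t ∈ Ici (0 : ℝ),
      exp (2 * y t / n) = -l / a * (1 - (c₂ * exp (2 * a * t / n))⁻¹) := by
    intro t ht
    have h0 : exp (2 * y 0 / n) - -l / a = l / (a * c₂) := by
      rw [hy0, show 2 * c₀ / n = -(-2 * c₀ / n) by ring, exp_neg]
      exact inv_sub_neg_div_eq_div_mul_of_eq_div ha.ne' (exp_pos _).ne' hc₂ hc₂0.ne'
    have hlin := eq_add_mul_exp_neg_of_hasDerivAt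
      (fun s hs => hasDerivAt_exp_two_mul_div ha.ne' (hode s hs)) ht
    rw [hlin, h0, show -(2 * a / n * t) = -(2 * a * t / n) by ring, exp_neg]
    field_simp
    ring
  have hy : ∀ t, y t = n / 2 * log (exp (2 * y t / n)) := fun t => by
    rw [log_exp]; field_simp
  have hQ_mem :
      ∀ t ∈ Ici (0 : ℝ), exp (2 * y t / n) ∈ Icc (-l / a * (1 - c₂⁻¹)) (-l / a) := by
    intro t ht
    have hX : 1 ≤ exp (2 * a * t / n) := one_le_exp (by have : (0 : ℝ) ≤ t := ht; positivity)
    rw [hQ t ht]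
    have hm : 0 ≤ -l / a := div_nonneg (by linarith) ha.le
    constructor
    · gcongr
      exact le_mul_of_one_le_right hc₂0.le hX
    · exact mul_le_of_le_one_right hm (sub_le_self _ (by positivity))
  refine ⟨fun t ht => ?_, ⟨n / 2 * max |log (-l / a * (1 - c₂⁻¹))| |log (-l / a)|,
    fun t ht => ?_⟩⟩
  · rw [hy t, hQ t ht, neg_mul, ← mul_neg, ← log_inv]
    congr 2
    field_simp
  · rw [hy t, abs_mul, abs_of_pos (half_pos hn0)]
    gcongr
    refine abs_log_le_max_of_mem_Icc ?_ (hQ_mem t ht)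
    have : 0 < -l / a := div_pos (by linarith) ha
    have : 0 < 1 - c₂⁻¹ := sub_pos.2 (inv_lt_one_of_one_lt₀ hc₂gt)
    positivity
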